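/- arXiv:1911.04272 — 4 statements merged into one kernel-verified Lean document; each statement's English description precedes it below -/
import Mathlib

section
/- Let H be a real Hilbert space and (H_i) a decreasing net of closed affine subspaces (translates of closed linear subspaces) of H indexed by a directed set. Then the following are equivalent: (i) the intersection of all H_i is empty; (ii) the distance d(x, H_i) tends to infinity for some x in H; (iii) the distance d(x, H_i) tends to infinity for every x in H. -/
/-! Let `d i = d(x, K i)`, which increases with `i`. If it stays bounded, it converges to some
`c`, and the nearest points `v i ∈ K i` to `x` form a Cauchy net: for `i ≤ j` both `v i` and
`v j` lie in `K i`, so their midpoint is at distance at least `d i` from `x`, and the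
parallelogram law gives `‖v i - v j‖² ≤ 2 (c² - d i²)`. The limit of this net lies in every
`K i`. -/

open Filter Metric

/-- A closed affine subspace of a real Hilbert space: a nonempty translate of a
closed linear subspace. -/
def IsClosedAffineSubspace {H : Type*} [NormedAddCommGroup H]
    [InnerProductSpace ℝ H] (K : Set H) : Prop :=
  ∃ (p : H) (E : Submodule ℝ H), IsClosed (E : Set H) ∧ K = (p + ·) '' (E : Set H)

open Topology Set

theorem IsClosedAffineSubspace.nonempty {H : Type*} [NormedAddCommGroup H]
    [InnerProductSpace ℝ H] {K : Set H} (hK : IsClosedAffineSubspace K) : K.Nonempty := by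
  obtain ⟨p, E, -, rfl⟩ := hK
  exact ⟨p, 0, E.zero_mem, add_zero p⟩

theorem IsClosedAffineSubspace.isClosed {H : Type*} [NormedAddCommGroup H]
    [InnerProductSpace ℝ H] {K : Set H} (hK : IsClosedAffineSubspace K) : IsClosed K := by
  obtain ⟨p, E, hE, rfl⟩ := hK
  exact (Homeomorph.addLeft p).isClosedMap _ hE

theorem IsClosedAffineSubspace.convex {H : Type*} [NormedAddCommGroup H]
    [InnerProductSpace ℝ H] {K : Set H} (hK : IsClosedAffineSubspace K) : Convex ℝ K := by
  obtain ⟨p, E, -, rfl⟩ := hK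
  exact E.convex.translate p

theorem cauchySeq_of_dist_le_of_tendsto_zero {ι X : Type*} [Nonempty ι] [Preorder ι]
    [IsDirected ι (· ≤ ·)] [PseudoMetricSpace X] {v : ι → X} (b : ι → ℝ)
    (h : ∀ i j, i ≤ j → dist (v i) (v j) ≤ b i) (hb : Tendsto b atTop (𝓝 0)) :
    CauchySeq v := by
  refine Metric.cauchy_iff.2 ⟨inferInstance, fun ε hε => ?_⟩
  obtain ⟨N, hN⟩ := (hb.eventually (gt_mem_nhds (half_pos hε))).exists
  refine ⟨v '' Ici N, image_mem_map (Ici_mem_atTop N), ?_⟩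
  rintro _ ⟨m, hm, rfl⟩ _ ⟨n, hn, rfl⟩
  calc dist (v m) (v n) ≤ dist (v N) (v m) + dist (v N) (v n) := dist_triangle_left _ _ _
    _ ≤ b N + b N := add_le_add (h N m hm) (h N n hn)
    _ < ε := by linarith

theorem monotone_infDist_of_antitone {ι X : Type*} [Preorder ι] [PseudoMetricSpace X]
    {K : ι → Set X} (hne : ∀ i, (K i).Nonempty) (hanti : Antitone K) (x : X) :
    Monotone fun i => infDist x (K i) :=
  fun _ j hij => infDist_le_infDist_of_subset (hanti hij) (hne j)

section InnerProductSpace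

variable {H : Type*} [NormedAddCommGroup H] [InnerProductSpace ℝ H]

theorem exists_mem_norm_sub_eq_infDist {K : Set H} (hne : K.Nonempty) (hcomplete : IsComplete K)
    (hconv : Convex ℝ K) (x : H) : ∃ v ∈ K, ‖x - v‖ = infDist x K := by
  obtain ⟨v, hv, hmin⟩ := exists_norm_eq_iInf_of_complete_convex hne hcomplete hconv x
  refine ⟨v, hv, hmin.trans ?_⟩
  simp only [infDist_eq_iInf, dist_eq_norm]

theorem norm_sub_sq_le_of_mem_convex {K : Set H} (hconv : Convex ℝ K) {u w : H} (hu : u ∈ K)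
    (hw : w ∈ K) (x : H) :
    ‖u - w‖ ^ 2 ≤ 2 * (‖x - u‖ ^ 2 + ‖x - w‖ ^ 2) - 4 * infDist x K ^ 2 := by
  set m : H := (1 / 2 : ℝ) • u + (1 / 2 : ℝ) • w
  have hm : m ∈ K := hconv hu hw (by norm_num) (by norm_num) (by norm_num)
  have hdm : infDist x K ^ 2 ≤ ‖x - m‖ ^ 2 := by
    gcongr
    · exact infDist_nonneg
    · exact dist_eq_norm x m ▸ infDist_le_dist_of_mem hm
  have hpar := parallelogram_law_with_norm ℝ (x - u) (x - w)
  rw [show x - u + (x - w) = (2 : ℝ) • (x - m) by module, show x - u - (x - w) = w - u by abel,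
    norm_smul, norm_sub_rev w u, Real.norm_ofNat] at hpar
  nlinarith

variable [CompleteSpace H] {ι : Type*} [Nonempty ι] [Preorder ι] [IsDirected ι (· ≤ ·)]
  {K : ι → Set H}

theorem nonempty_iInter_of_bddAbove_infDist (hne : ∀ i, (K i).Nonempty)
    (hcl : ∀ i, IsClosed (K i)) (hconv : ∀ i, Convex ℝ (K i)) (hanti : Antitone K) {x : H}
    (hbdd : BddAbove (range fun i => infDist x (K i))) : (⋂ i, K i).Nonempty := by
  set d : ι → ℝ := fun i => infDist x (K i)
  set c := ⨆ i, d i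
  have hd_le : ∀ i, d i ≤ c := le_ciSup hbdd
  have hd_lim : Tendsto d atTop (𝓝 c) :=
    tendsto_atTop_ciSup (monotone_infDist_of_antitone hne hanti x) hbdd
  choose v hvK hv using fun i =>
    exists_mem_norm_sub_eq_infDist (hne i) (hcl i).isComplete (hconv i) x
  have hdist : ∀ i j, i ≤ j → dist (v i) (v j) ≤ √(2 * (c ^ 2 - d i ^ 2)) := by
    intro i j hij
    have hsq := norm_sub_sq_le_of_mem_convex (hconv i) (hvK i) (hanti hij (hvK j)) x
    rw [hv i, hv j] at hsq
    have hdj : d j ^ 2 ≤ c ^ 2 := pow_le_pow_left₀ infDist_nonneg (hd_le j) 2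
    exact dist_eq_norm (v i) (v j) ▸ Real.le_sqrt_of_sq_le (by linarith)
  have hb : Tendsto (fun i => √(2 * (c ^ 2 - d i ^ 2))) atTop (𝓝 0) := by
    have hgap : Tendsto (fun i => 2 * (c ^ 2 - d i ^ 2)) atTop (𝓝 0) := by
      have := ((tendsto_const_nhds (x := c ^ 2)).sub (hd_lim.pow 2)).const_mul 2
      rwa [sub_self, mul_zero] at this
    exact Real.sqrt_zero ▸ hgap.sqrt
  obtain ⟨y, hy⟩ :=
    cauchySeq_tendsto_of_complete (cauchySeq_of_dist_le_of_tendsto_zero _ hdist hb)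
  exact ⟨y, mem_iInter.2 fun i => (hcl i).mem_of_tendsto hy <|
    (eventually_ge_atTop i).mono fun j hij => hanti hij (hvK j)⟩

theorem nonempty_iInter_iff_bddAbove_infDist (hne : ∀ i, (K i).Nonempty)
    (hcl : ∀ i, IsClosed (K i)) (hconv : ∀ i, Convex ℝ (K i)) (hanti : Antitone K) (x : H) :
    (⋂ i, K i).Nonempty ↔ BddAbove (range fun i => infDist x (K i)) :=
  ⟨fun ⟨y, hy⟩ =>
    ⟨dist x y, forall_mem_range.2 fun i => infDist_le_dist_of_mem (mem_iInter.1 hy i)⟩,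
    nonempty_iInter_of_bddAbove_infDist hne hcl hconv hanti⟩

end InnerProductSpace

/-- for a decreasing net of closed affine subspaces of a real Hilbert
space, empty intersection is equivalent to the distance from some (equivalently,
every) point tending to infinity. -/
theorem empty_intersection_iff_dist_tendsto_atTop
    {H : Type*} [NormedAddCommGroup H] [InnerProductSpace ℝ H] [CompleteSpace H]
    {ι : Type*} [Nonempty ι] [Preorder ι] [IsDirected ι (· ≤ ·)]
    (K : ι → Set H) (hK : ∀ i, IsClosedAffineSubspace (K i))
    (hmono : ∀ i j, i ≤ j → K j ⊆ K i) :
    ((⋂ i, K i) = ∅ ↔ ∃ x : H, Tendsto (fun i => infDist x (K i)) atTop atTop) ∧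
    ((⋂ i, K i) = ∅ ↔ ∀ x : H, Tendsto (fun i => infDist x (K i)) atTop atTop) := by
  have hne i := (hK i).nonempty
  have hanti : Antitone K := fun i j => hmono i j
  have key (x : H) : (⋂ i, K i) = ∅ ↔ Tendsto (fun i => infDist x (K i)) atTop atTop := by
    rw [← not_nonempty_iff_eq_empty, nonempty_iInter_iff_bddAbove_infDist hne
      (fun i => (hK i).isClosed) (fun i => (hK i).convex) hanti x]
    exact ⟨tendsto_atTop_atTop_of_monotone' (monotone_infDist_of_antitone hne hanti x),
      not_bddAbove_of_tendsto_atTop⟩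
  exact ⟨⟨fun h => ⟨0, (key 0).1 h⟩, fun ⟨x, hx⟩ => (key x).2 hx⟩,
    ⟨fun h x => (key x).1 h, fun h => (key 0).2 (h 0)⟩⟩
end

section
/- Let G be a locally compact group with a Haar measure m, H a real Hilbert space with an affine isometric action α of G, and Λ ⊆ G a countable uniformly discrete subset (there is a compact neighborhood K of the identity such that the sets gK, g ∈ Λ, are pairwise disjoint). Fix x, y ∈ H. Then the exponent of convergence of the series ∑_{g ∈ Λ} e^{-s‖gx−y‖²} is at most the exponent of convergence of the integral ∫_G e^{-s‖gx−y‖²} dm(g). -/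
open MeasureTheory Real
open scoped ENNReal

/-!
Let `φ g = ‖g x - y‖` and let `K` be a compact neighbourhood of `1` whose `Λ`-translates are
disjoint. Since the action is isometric, `φ (g h) ≤ φ g + C` for `h ∈ K`, where `C` bounds the
displacement of `x` over `K`. Trading a little of the exponent for a constant,
`e^{-(r+ε) φ(g)²} ≤ e^{D} e^{-r φ(gh)²}` for `h ∈ K`, with `D = (r + r²/ε) C²`. Integrating over
`K` and summing over `Λ` gives `m(K) ∑_{g∈Λ} e^{-(r+ε)φ(g)²} ≤ e^{D} ∫_G e^{-rφ²} dm`; as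
`m(K) > 0`, convergence of the integral at `r` forces convergence of the series at every `r + ε`.
-/

noncomputable def convergenceExponent (F : ℝ → ℝ≥0∞) : ℝ≥0∞ :=
  sInf {s : ℝ≥0∞ | ∃ r : ℝ, s = ENNReal.ofReal r ∧ 0 < r ∧ F r < ⊤}

theorem convergenceExponent_le_of_lt_top_add {S I : ℝ → ℝ≥0∞}
    (h : ∀ r, 0 < r → I r < ⊤ → ∀ ε, 0 < ε → S (r + ε) < ⊤) :
    convergenceExponent S ≤ convergenceExponent I := by
  refine le_sInf ?_
  rintro _ ⟨r, rfl, hr, hI⟩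
  refine ENNReal.le_of_forall_pos_le_add fun ε hε _ => sInf_le ⟨r + ε, ?_, by positivity,
    h r hr hI ε hε⟩
  rw [ENNReal.ofReal_add hr.le ε.coe_nonneg, ENNReal.ofReal_coe_nnreal]

theorem mul_add_sq_le (r a c : ℝ) {ε : ℝ} (hε : 0 < ε) :
    r * (a + c) ^ 2 ≤ (r + ε) * a ^ 2 + (r + r ^ 2 / ε) * c ^ 2 := by
  have square : (ε * a - r * c) ^ 2 / ε = ε * a ^ 2 - 2 * r * a * c + r ^ 2 / ε * c ^ 2 := by
    field_simp
    ring
  nlinarith [div_nonneg (sq_nonneg (ε * a - r * c)) hε.le]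

theorem exp_neg_mul_sq_le {a b c r ε : ℝ} (hb : 0 ≤ b) (hba : b ≤ a + c) (hr : 0 ≤ r)
    (hε : 0 < ε) :
    exp (-(r + ε) * a ^ 2) ≤ exp ((r + r ^ 2 / ε) * c ^ 2) * exp (-r * b ^ 2) := by
  rw [← exp_add, exp_le_exp]
  have : r * b ^ 2 ≤ r * (a + c) ^ 2 := by gcongr
  linarith [mul_add_sq_le r a c hε]

theorem dist_map_mul_apply_le {G X : Type*} [Group G] [PseudoMetricSpace X]
    (α : G →* (X ≃ᵢ X)) (g h : G) (x y : X) :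
    dist (α (g * h) x) y ≤ dist (α g x) y + dist (α h x) x := by
  calc dist (α (g * h) x) y ≤ dist (α (g * h) x) (α g x) + dist (α g x) y := dist_triangle _ _ _
    _ = dist (α g x) y + dist (α h x) x := by
      rw [map_mul, IsometryEquiv.mul_apply, (α g).dist_eq, add_comm]

section Packing

variable {G : Type*} [Group G] [MeasurableSpace G] [MeasurableMul G]
  (m : Measure G) [m.IsMulLeftInvariant]

theorem tsum_setLIntegral_mul_left_le_lintegral {Λ K : Set G} (hΛ : Λ.Countable)
    (hK : MeasurableSet K) (hdisj : Λ.PairwiseDisjoint fun g => (g * ·) '' K) (f : G → ℝ≥0∞) :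
    ∑' g : Λ, ∫⁻ h in K, f (g * h) ∂m ≤ ∫⁻ g, f g ∂m := by
  have : Countable Λ := hΛ.to_subtype
  have hemb (g : G) : MeasurableEmbedding (g * ·) := (MeasurableEquiv.mulLeft g).measurableEmbedding
  simp_rw [fun g : Λ => (measurePreserving_mul_left m (g : G)).setLIntegral_comp_emb (hemb g) f K]
  rw [← lintegral_iUnion (fun g : Λ => (hemb g).measurableSet_image.2 hK)
    fun i j hij => hdisj i.2 j.2 (Subtype.coe_injective.ne hij)]
  exact setLIntegral_le_lintegral _ _

theorem tsum_exp_mul_measure_le_lintegral {Λ K : Set G} (hΛ : Λ.Countable)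
    (hK : MeasurableSet K) (hdisj : Λ.PairwiseDisjoint fun g => (g * ·) '' K)
    {φ : G → ℝ} (hφ : ∀ g, 0 ≤ φ g) {C : ℝ} (hφK : ∀ g ∈ Λ, ∀ h ∈ K, φ (g * h) ≤ φ g + C)
    {r ε : ℝ} (hr : 0 ≤ r) (hε : 0 < ε) :
    (∑' g : Λ, ENNReal.ofReal (exp (-(r + ε) * φ g ^ 2))) * m K
      ≤ ENNReal.ofReal (exp ((r + r ^ 2 / ε) * C ^ 2))
        * ∫⁻ g, ENNReal.ofReal (exp (-r * φ g ^ 2)) ∂m := by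
  set D := ENNReal.ofReal (exp ((r + r ^ 2 / ε) * C ^ 2))
  have local_bound (g : Λ) : ENNReal.ofReal (exp (-(r + ε) * φ g ^ 2)) * m K
      ≤ D * ∫⁻ h in K, ENNReal.ofReal (exp (-r * φ (g * h) ^ 2)) ∂m := by
    rw [← setLIntegral_const, ← lintegral_const_mul' _ _ ENNReal.ofReal_ne_top]
    refine setLIntegral_mono' hK fun h hh => ?_
    rw [← ENNReal.ofReal_mul (exp_nonneg _)]
    exact ENNReal.ofReal_le_ofReal
      (exp_neg_mul_sq_le (hφ _) (hφK g g.2 h hh) hr hε)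
  calc (∑' g : Λ, ENNReal.ofReal (exp (-(r + ε) * φ g ^ 2))) * m K
      ≤ ∑' g : Λ, D * ∫⁻ h in K, ENNReal.ofReal (exp (-r * φ (g * h) ^ 2)) ∂m := by
        rw [← ENNReal.tsum_mul_right]
        exact ENNReal.tsum_le_tsum local_bound
    _ ≤ D * ∫⁻ g, ENNReal.ofReal (exp (-r * φ g ^ 2)) ∂m := by
        rw [ENNReal.tsum_mul_left]
        gcongr
        exact tsum_setLIntegral_mul_left_le_lintegral m hΛ hK hdisj _

end Packing

theorem exponent_series_le_exponent_integral_general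
    {G : Type*} [Group G] [TopologicalSpace G] [IsTopologicalGroup G]
    [MeasurableSpace G] [BorelSpace G]
    (m : Measure G) [m.IsHaarMeasure]
    {H : Type*} [NormedAddCommGroup H]
    (α : G →* (H ≃ᵢ H)) (hcont : ∀ z : H, Continuous fun g : G => α g z)
    (Λ : Set G) (hΛ : Λ.Countable)
    (hdisc : ∃ K : Set G, K ∈ nhds (1 : G) ∧ IsCompact K ∧
      (Λ.PairwiseDisjoint fun g => (g * ·) '' K))
    (x y : H) :
    sInf {s : ℝ≥0∞ | ∃ r : ℝ, s = ENNReal.ofReal r ∧ 0 < r ∧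
        ∑' g : Λ, ENNReal.ofReal (Real.exp (-r * ‖α (g : G) x - y‖ ^ 2)) < ⊤}
      ≤ sInf {s : ℝ≥0∞ | ∃ r : ℝ, s = ENNReal.ofReal r ∧ 0 < r ∧
        ∫⁻ g, ENNReal.ofReal (Real.exp (-r * ‖α g x - y‖ ^ 2)) ∂m < ⊤} := by
  obtain ⟨K₀, hK₀, hK₀c, hdisj₀⟩ := hdisc
  obtain ⟨K, hK, hKclosed, hKK₀⟩ := exists_mem_nhds_isClosed_subset hK₀
  have hdisj : Λ.PairwiseDisjoint fun g => (g * ·) '' K :=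
    hdisj₀.mono_on fun g _ => Set.image_mono hKK₀
  obtain ⟨C, hC⟩ := (hK₀c.of_isClosed_subset hKclosed hKK₀).bddAbove_image
    ((hcont x).dist continuous_const).continuousOn
  have hφK (g : G) (_ : g ∈ Λ) (h : G) (hh : h ∈ K) : ‖α (g * h) x - y‖ ≤ ‖α g x - y‖ + C := by
    simp only [← dist_eq_norm]
    exact (dist_map_mul_apply_le α g h x y).trans (by gcongr; exact hC ⟨h, hh, rfl⟩)
  refine convergenceExponent_le_of_lt_top_add fun r hr hI ε hε => ?_
  have hbound := tsum_exp_mul_measure_le_lintegral m hΛ hKclosed.measurableSet hdisj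
    (φ := fun g => ‖α g x - y‖) (fun _ => norm_nonneg _) hφK hr.le hε
  exact ENNReal.lt_top_of_mul_ne_top_left
    (ne_top_of_le_ne_top (ENNReal.mul_ne_top ENNReal.ofReal_ne_top hI.ne) hbound)
    (m.measure_pos_of_mem_nhds hK).ne'

/-- let `α` be a continuous affine isometric action of a locally compact
group `G` (with Haar measure `m`) on a real Hilbert space `H`, and `Λ ⊆ G` a countable
uniformly discrete subset.  Then the exponent of convergence of the series
`∑_{g ∈ Λ} e^{-s ‖gx - y‖²}` is at most the exponent of convergence of the
Poincaré integral `∫_G e^{-s ‖gx - y‖²} dm(g)`. -/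
theorem exponent_series_le_exponent_integral
    {G : Type*} [Group G] [TopologicalSpace G] [IsTopologicalGroup G]
    [LocallyCompactSpace G] [MeasurableSpace G] [BorelSpace G]
    (m : Measure G) [m.IsHaarMeasure]
    {H : Type*} [NormedAddCommGroup H] [InnerProductSpace ℝ H] [CompleteSpace H]
    (α : G →* (H ≃ᵢ H)) (hcont : ∀ z : H, Continuous fun g : G => α g z)
    (Λ : Set G) (hΛ : Λ.Countable)
    (hdisc : ∃ K : Set G, K ∈ nhds (1 : G) ∧ IsCompact K ∧
      (Λ.PairwiseDisjoint fun g => (g * ·) '' K))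
    (x y : H) :
    sInf {s : ℝ≥0∞ | ∃ r : ℝ, s = ENNReal.ofReal r ∧ 0 < r ∧
        ∑' g : Λ, ENNReal.ofReal (Real.exp (-r * ‖α (g : G) x - y‖ ^ 2)) < ⊤}
      ≤ sInf {s : ℝ≥0∞ | ∃ r : ℝ, s = ENNReal.ofReal r ∧ 0 < r ∧
        ∫⁻ g, ENNReal.ofReal (Real.exp (-r * ‖α g x - y‖ ^ 2)) ∂m < ⊤} :=
  exponent_series_le_exponent_integral_general m α hcont Λ hΛ hdisc x y
end

section
/- Let T be a tree quadratically embedded in a real Hilbert space H (so d(x,y) = ‖x−y‖² for vertices x,y), let S ⊆ T be a nonempty subtree, K the closed affine span of S in H, and P_K : H → K the orthogonal projection. For a vertex v ∈ T, let P_S(v) be the unique vertex of S minimizing the graph distance d(v, ·) on S. Then P_K(v) = P_S(v) for every vertex v ∈ T. -/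
/-!
The closest vertex `m` of the subtree `S` is a gate: the geodesic from `v` to any `w ∈ S`
passes through `m`, since otherwise the tree path `v → m → w` would revisit a vertex of `S`
strictly closer to `v` than `m`. Hence `d(v, w) = d(v, m) + d(m, w)`, which under the quadratic
embedding is Pythagoras' identity, i.e. `ι v - ι m ⟂ ι w - ι m`. The hyperplane through `ι m`
orthogonal to `ι v - ι m` is closed and contains `ι '' S`, hence the closed affine span, and
orthogonality makes `ι m` the nearest point of it.
-/

open scoped InnerProductSpace

namespace SimpleGraph

variable {V : Type*} {G : SimpleGraph V}

lemma IsAcyclic.length_eq_dist_of_isPath (hG : G.IsAcyclic) {u v : V} {p : G.Walk u v}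
    (hp : p.IsPath) : p.length = G.dist u v := by
  obtain ⟨q, hq, hlen⟩ := p.reachable.exists_path_of_dist
  have hpq : p = q := congrArg Subtype.val ((hG.subsingleton_path u v).elim ⟨p, hp⟩ ⟨q, hq⟩)
  rw [hpq, hlen]

lemma Walk.dist_lt_of_mem_support_of_length_eq_dist {u v x : V} {p : G.Walk u v}
    (hp : p.length = G.dist u v) (hx : x ∈ p.support) (hxv : x ≠ v) :
    G.dist u x < G.dist u v := by
  obtain ⟨r, s, rfl⟩ := p.mem_support_iff_exists_append.mp hx
  have hs : s.length ≠ 0 := fun h => hxv (s.eq_of_length_eq_zero h)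
  have hr : G.dist u x ≤ r.length := dist_le r
  rw [Walk.length_append] at hp
  omega

lemma Preconnected.exists_isPath_support_subset {S : Set V} (hS : (G.induce S).Preconnected)
    {u v : V} (hu : u ∈ S) (hv : v ∈ S) :
    ∃ p : G.Walk u v, p.IsPath ∧ ∀ x ∈ p.support, x ∈ S := by
  obtain ⟨q, hq⟩ := (hS ⟨u, hu⟩ ⟨v, hv⟩).exists_isPath
  refine ⟨q.map (Embedding.induce (G := G) S).toHom,
    hq.map (Embedding.induce (G := G) S).injective, fun x hx => ?_⟩
  obtain ⟨y, -, rfl⟩ := List.mem_map.mp (Walk.support_map _ q ▸ hx)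
  exact y.2

theorem IsAcyclic.dist_eq_dist_add_dist_of_forall_dist_le {S : Set V} (hG : G.IsAcyclic)
    (hS : (G.induce S).Preconnected) {v m w : V} (hvm : G.Reachable v m) (hm : m ∈ S)
    (hw : w ∈ S) (hmin : ∀ u ∈ S, G.dist v m ≤ G.dist v u) :
    G.dist v w = G.dist v m + G.dist m w := by
  obtain ⟨p, -, hp⟩ := hvm.exists_path_of_dist
  obtain ⟨q, hq, hqS⟩ := hS.exists_isPath_support_subset hm hw
  have hpq : (p.append q).IsPath := by
    rw [Walk.isPath_def, Walk.support_append, List.nodup_append]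
    refine ⟨(p.isPath_of_length_eq_dist hp).support_nodup,
      hq.support_nodup.sublist (List.tail_sublist _), fun x hxp y hyq hxy => ?_⟩
    subst hxy
    have hxm : x ≠ m := by
      have hnodup := hq.support_nodup
      rw [← q.cons_tail_support, List.nodup_cons] at hnodup
      exact fun h => hnodup.1 (h ▸ hyq)
    exact (hmin x (hqS x (List.mem_of_mem_tail hyq))).not_gt
      (p.dist_lt_of_mem_support_of_length_eq_dist hp hxp hxm)
  rw [← hG.length_eq_dist_of_isPath hpq, Walk.length_append, hp, hG.length_eq_dist_of_isPath hq]

end SimpleGraph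

section InnerProductSpace

variable {H : Type*} [NormedAddCommGroup H] [InnerProductSpace ℝ H]

lemma real_inner_sub_sub_eq_zero_of_norm_sub_sq_eq_add {a b c : H}
    (h : ‖a - c‖ ^ 2 = ‖a - b‖ ^ 2 + ‖b - c‖ ^ 2) : ⟪a - b, c - b⟫_ℝ = 0 := by
  rw [← norm_sub_sq_eq_norm_sq_add_norm_sq_iff_real_inner_eq_zero, sub_sub_sub_cancel_right,
    norm_sub_rev c b]
  nlinarith

lemma real_inner_sub_eq_zero_of_mem_closure_affineSpan {s : Set H} {p x : H}
    (h : ∀ z ∈ s, ⟪x - p, z - p⟫_ℝ = 0) {y : H} (hy : y ∈ closure (affineSpan ℝ s : Set H)) :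
    ⟪x - p, y - p⟫_ℝ = 0 := by
  have hspan : affineSpan ℝ s ≤ AffineSubspace.mk' p (ℝ ∙ (x - p))ᗮ :=
    affineSpan_le.mpr fun z hz => by
      simpa [AffineSubspace.mem_mk', Submodule.mem_orthogonal_singleton_iff_inner_right]
        using h z hz
  refine closure_minimal (t := {z : H | ⟪x - p, z - p⟫_ℝ = 0}) (fun z hz => ?_)
    (isClosed_eq (by fun_prop) continuous_const) hy
  simpa [AffineSubspace.mem_mk', Submodule.mem_orthogonal_singleton_iff_inner_right]
    using hspan hz

lemma norm_sub_le_norm_sub_of_real_inner_eq_zero {p x y : H} (h : ⟪x - p, y - p⟫_ℝ = 0) :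
    ‖x - p‖ ≤ ‖x - y‖ := by
  have hpyth : ‖x - y‖ * ‖x - y‖ = ‖x - p‖ * ‖x - p‖ + ‖y - p‖ * ‖y - p‖ := by
    rw [← norm_sub_sq_eq_norm_sq_add_norm_sq_iff_real_inner_eq_zero] at h
    rwa [sub_sub_sub_cancel_right] at h
  exact (mul_self_le_mul_self_iff (norm_nonneg _) (norm_nonneg _)).mpr
    (by nlinarith [mul_self_nonneg ‖y - p‖])

end InnerProductSpace

theorem tree_projection_eq_closest_vertex_general
    {V : Type*} (G : SimpleGraph V) (hG : G.IsTree)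
    {H : Type*} [NormedAddCommGroup H] [InnerProductSpace ℝ H]
    (ι : V → H) (hι : ∀ a b : V, ‖ι a - ι b‖ ^ 2 = (G.dist a b : ℝ))
    (S : Set V) (hconn : (G.induce S).Connected)
    (v : V) (m : V) (hm : m ∈ S) (hmin : ∀ w ∈ S, G.dist v m ≤ G.dist v w) :
    ι m ∈ closure (affineSpan ℝ (ι '' S) : Set H) ∧
      ∀ y ∈ closure (affineSpan ℝ (ι '' S) : Set H), ‖ι v - ι m‖ ≤ ‖ι v - y‖ := by
  have horth : ∀ w ∈ S, ⟪ι v - ι m, ι w - ι m⟫_ℝ = 0 := fun w hw =>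
    real_inner_sub_sub_eq_zero_of_norm_sub_sq_eq_add <| by
      rw [hι, hι, hι, hG.isAcyclic.dist_eq_dist_add_dist_of_forall_dist_le hconn.preconnected
        (hG.connected v m) hm hw hmin]
      push_cast
      ring
  refine ⟨subset_closure (subset_affineSpan ℝ _ (Set.mem_image_of_mem ι hm)), fun y hy => ?_⟩
  refine norm_sub_le_norm_sub_of_real_inner_eq_zero
    (real_inner_sub_eq_zero_of_mem_closure_affineSpan ?_ hy)
  rintro _ ⟨w, hw, rfl⟩
  exact horth w hw

/-- let `T` be a tree quadratically embedded via `ι` in a real Hilbert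
space (`‖ι a - ι b‖² = d(a,b)`), `S` a nonempty subtree, and `K` the closed affine
span of `ι(S)`.  If `m ∈ S` is the vertex of `S` closest to `v` in the graph
metric, then `ι m` is the orthogonal projection of `ι v` onto `K`, i.e. `ι m`
is the point of `K` closest to `ι v`. -/
theorem tree_projection_eq_closest_vertex
    {V : Type*} (G : SimpleGraph V) (hG : G.IsTree)
    {H : Type*} [NormedAddCommGroup H] [InnerProductSpace ℝ H] [CompleteSpace H]
    (ι : V → H) (hι : ∀ a b : V, ‖ι a - ι b‖ ^ 2 = (G.dist a b : ℝ))
    (S : Set V) (hS : S.Nonempty) (hconn : (G.induce S).Connected)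
    (v : V) (m : V) (hm : m ∈ S) (hmin : ∀ w ∈ S, G.dist v m ≤ G.dist v w) :
    ι m ∈ closure (affineSpan ℝ (ι '' S) : Set H) ∧
      ∀ y ∈ closure (affineSpan ℝ (ι '' S) : Set H), ‖ι v - ι m‖ ≤ ‖ι v - y‖ :=
  tree_projection_eq_closest_vertex_general G hG ι hι S hconn v m hm hmin
end

section
/- Let G be a locally compact group with left Haar measure, π an orthogonal (or unitary) representation of G on a separable Hilbert space that has almost invariant vectors but no nonzero invariant vector, and f : G → [1, ∞) a proper continuous function. Then there exists a 1-cocycle c : G → ⊕_{n∈ℕ} H_π (for the representation π^{⊕ℕ}) of the form c(g) = (π(g)F(n) − F(n))_{n∈ℕ} with F(n) = ξ_n/√n for unit vectors ξ_n, such that ‖c(g)‖ ≤ f(g) for all g ∈ G and c is not a coboundary (equivalently, the associated affine isometric action has no fixed point). -/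
/-!
Pick unit vectors `ξₙ` with `‖π g ξₙ - ξₙ‖ < δₙ` on the compact sublevel set `{f ≤ δₙ⁻¹}`.
Off that set the trivial bound `‖π g ξₙ - ξₙ‖ ≤ 2 < 2 δₙ f g` holds, so
`‖π g ξₙ - ξₙ‖ ≤ 2 δₙ f g` everywhere; choosing `(2 δₙ)² = wₙ` with `∑ wₙ = 1` bounds
`‖c g‖` by `f g`, and dominated convergence makes `c` continuous. If `c` were the coboundary
of `v`, each `Fₙ - vₙ` would be invariant, hence `v = F`; but `‖Fₙ‖² = 1/n` is not summable.
-/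

open Filter Topology

section LpTwo

variable {ι E : Type*} [NormedAddCommGroup E]

lemma lp.norm_sq_eq_tsum (x : lp (fun _ : ι => E) 2) : ‖x‖ ^ 2 = ∑' i, ‖x i‖ ^ 2 := by
  simpa only [ENNReal.toReal_ofNat, Real.rpow_two] using lp.norm_rpow_eq_tsum (by norm_num) x

lemma memℓp_two_of_norm_sq_le {x : ι → E} {w : ι → ℝ} (hw : Summable w)
    (hx : ∀ i, ‖x i‖ ^ 2 ≤ w i) : Memℓp x 2 :=
  memℓp_gen <| by
    simpa only [ENNReal.toReal_ofNat, Real.rpow_two] using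
      hw.of_nonneg_of_le (fun i => sq_nonneg _) hx

lemma lp.norm_le_of_norm_sq_le_mul {x : lp (fun _ : ι => E) 2} {r : ℝ} (hr : 0 ≤ r)
    {w : ι → ℝ} (hw : Summable w) (hw1 : ∑' i, w i ≤ 1) (hx : ∀ i, ‖x i‖ ^ 2 ≤ r ^ 2 * w i) :
    ‖x‖ ≤ r := by
  refine (pow_le_pow_iff_left₀ (norm_nonneg x) hr two_ne_zero).1 ?_
  calc ‖x‖ ^ 2 = ∑' i, ‖x i‖ ^ 2 := lp.norm_sq_eq_tsum x
    _ ≤ ∑' i, r ^ 2 * w i :=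
        ((hw.mul_left _).of_nonneg_of_le (fun i => sq_nonneg _) hx).tsum_le_tsum hx
          (hw.mul_left _)
    _ ≤ r ^ 2 := by
        rw [tsum_mul_left]
        exact mul_le_of_le_one_right (sq_nonneg r) hw1

lemma continuous_lp_two_of_norm_sq_le {X : Type*} [TopologicalSpace X]
    {c : X → lp (fun _ : ι => E) 2} (hc : ∀ i, Continuous fun x => c x i)
    {M : X → ℝ} (hM : Continuous M) {w : ι → ℝ} (hw0 : ∀ i, 0 ≤ w i) (hw : Summable w)
    (hcw : ∀ x i, ‖c x i‖ ^ 2 ≤ M x * w i) : Continuous c := by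
  refine continuous_iff_continuousAt.2 fun x₀ => tendsto_iff_norm_sub_tendsto_zero.2 ?_
  have hterm (i : ι) :
      Tendsto (fun x => ‖c x i - c x₀ i‖ ^ 2) (𝓝 x₀) (𝓝 (‖c x₀ i - c x₀ i‖ ^ 2)) :=
    (((hc i).sub continuous_const).norm.pow 2).continuousAt
  have hdom : ∀ᶠ x in 𝓝 x₀, ∀ i, ‖‖c x i - c x₀ i‖ ^ 2‖ ≤ 2 * (2 * M x₀ + 1) * w i := by
    filter_upwards [(hM.tendsto x₀).eventually (gt_mem_nhds (lt_add_one (M x₀)))] with x hx i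
    have hsub := norm_sub_le (c x i) (c x₀ i)
    have hx_i := hcw x i
    have hx₀_i := hcw x₀ i
    rw [Real.norm_of_nonneg (sq_nonneg _)]
    nlinarith [hw0 i, norm_nonneg (c x i - c x₀ i), sq_nonneg (‖c x i‖ - ‖c x₀ i‖)]
  have hsq : Tendsto (fun x => ‖c x - c x₀‖ ^ 2) (𝓝 x₀) (𝓝 0) := by
    simpa [lp.norm_sq_eq_tsum] using
      tendsto_tsum_of_dominated_convergence (hw.mul_left _) hterm hdom
  simpa only [Real.sqrt_sq (norm_nonneg _), Real.sqrt_zero] using hsq.sqrt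

end LpTwo

section Representation

variable {E : Type*} [SeminormedAddCommGroup E] [Module ℝ E]

lemma norm_map_sub_self_le_of_lt (U : E ≃ₗᵢ[ℝ] E) {ξ : E} (hξ : ‖ξ‖ = 1) {δ r : ℝ}
    (hδ : 0 < δ) (hr : 1 ≤ r) (h : r ≤ δ⁻¹ → ‖U ξ - ξ‖ < δ) : ‖U ξ - ξ‖ ≤ 2 * δ * r := by
  by_cases hrδ : r ≤ δ⁻¹
  · nlinarith [h hrδ]
  · have hδr : 1 < δ * r := (inv_lt_iff_one_lt_mul₀' hδ).1 (not_le.1 hrδ)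
    calc ‖U ξ - ξ‖ ≤ ‖U ξ‖ + ‖ξ‖ := norm_sub_le _ _
      _ = 2 := by rw [U.norm_map, hξ]; norm_num
      _ ≤ 2 * δ * r := by linarith

lemma exists_norm_eq_one_norm_map_sub_self_le {G : Type*} [TopologicalSpace G]
    (π : G → E ≃ₗᵢ[ℝ] E)
    (halmost : ∀ ε > (0 : ℝ), ∀ K : Set G, IsCompact K →
      ∃ ξ : E, ‖ξ‖ = 1 ∧ ∀ g ∈ K, ‖π g ξ - ξ‖ < ε)
    {f : G → ℝ} (hf1 : ∀ g, 1 ≤ f g) (hfproper : ∀ R : ℝ, IsCompact {g : G | f g ≤ R})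
    {δ : ℝ} (hδ : 0 < δ) : ∃ ξ : E, ‖ξ‖ = 1 ∧ ∀ g, ‖π g ξ - ξ‖ ≤ 2 * δ * f g := by
  obtain ⟨ξ, hξ, hK⟩ := halmost δ hδ _ (hfproper δ⁻¹)
  exact ⟨ξ, hξ, fun g => norm_map_sub_self_le_of_lt (π g) hξ hδ (hf1 g) (hK g)⟩

lemma map_mul_sub_self {G : Type*} [Monoid G] (π : G →* (E ≃ₗᵢ[ℝ] E)) (g h : G) (x : E) :
    π (g * h) x - x = (π g x - x) + π g (π h x - x) := by
  rw [map_mul, LinearIsometryEquiv.coe_mul, Function.comp_apply, map_sub]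
  abel

lemma eq_of_map_sub_self_eq {G : Type*} (π : G → E ≃ₗᵢ[ℝ] E)
    (hnoinv : ∀ ξ : E, (∀ g : G, π g ξ = ξ) → ξ = 0) {x y : E}
    (h : ∀ g, π g x - x = π g y - y) : x = y :=
  sub_eq_zero.1 <| hnoinv _ fun g => by rw [map_sub]; exact sub_eq_sub_iff_sub_eq_sub.1 (h g)

end Representation

lemma norm_map_smul_sub_smul_le {E : Type*} [SeminormedAddCommGroup E] [NormedSpace ℝ E]
    (U : E ≃ₗᵢ[ℝ] E) {a : ℝ} (ha : |a| ≤ 1) (x : E) : ‖U (a • x) - a • x‖ ≤ ‖U x - x‖ := by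
  rw [map_smul, ← smul_sub, norm_smul, Real.norm_eq_abs]
  exact mul_le_of_le_one_left (norm_nonneg _) ha

lemma abs_inv_sqrt_natCast_le_one (n : ℕ) : |(√n)⁻¹| ≤ 1 := by
  rw [abs_of_nonneg (by positivity)]
  rcases n with _ | n
  · simp
  · exact inv_le_one_of_one_le₀ (Real.one_le_sqrt.2 (by simp))

lemma not_memℓp_two_inv_sqrt_smul {E : Type*} [NormedAddCommGroup E] [NormedSpace ℝ E]
    {ξ : ℕ → E} (hξ : ∀ n, ‖ξ n‖ = 1) : ¬ Memℓp (fun n : ℕ => (√n)⁻¹ • ξ n) 2 := by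
  intro hmem
  have hsq : (fun n : ℕ => ‖(√n)⁻¹ • ξ n‖ ^ (2 : ENNReal).toReal) = fun n : ℕ => (n : ℝ)⁻¹ := by
    ext n
    rw [ENNReal.toReal_ofNat, Real.rpow_two, norm_smul, hξ, mul_one, norm_inv,
      Real.norm_of_nonneg (Real.sqrt_nonneg _), inv_pow, Real.sq_sqrt n.cast_nonneg]
  exact Real.not_summable_natCast_inv (hsq ▸ hmem.summable (by norm_num))

theorem exists_cocycle_of_almost_invariant_vectors_general
    {G : Type*} [Group G] [TopologicalSpace G]
    {H : Type*} [NormedAddCommGroup H] [InnerProductSpace ℝ H]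
    (π : G →* (H ≃ₗᵢ[ℝ] H)) (hπcont : ∀ ξ : H, Continuous fun g : G => π g ξ)
    (halmost : ∀ ε > (0 : ℝ), ∀ K : Set G, IsCompact K →
      ∃ ξ : H, ‖ξ‖ = 1 ∧ ∀ g ∈ K, ‖π g ξ - ξ‖ < ε)
    (hnoinv : ∀ ξ : H, (∀ g : G, π g ξ = ξ) → ξ = 0)
    (f : G → ℝ) (hfcont : Continuous f) (hf1 : ∀ g, 1 ≤ f g)
    (hfproper : ∀ R : ℝ, IsCompact {g : G | f g ≤ R}) :
    ∃ (ξ : ℕ → H) (c : G → lp (fun _ : ℕ => H) 2),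
      (∀ n, ‖ξ n‖ = 1) ∧
      (∀ (g : G) (n : ℕ), (c g : ∀ _ : ℕ, H) n
          = π g ((Real.sqrt n)⁻¹ • ξ n) - (Real.sqrt n)⁻¹ • ξ n) ∧
      Continuous c ∧
      (∀ g h : G, ∀ n : ℕ, (c (g * h) : ∀ _ : ℕ, H) n
          = (c g : ∀ _ : ℕ, H) n + π g ((c h : ∀ _ : ℕ, H) n)) ∧
      (∀ g : G, ‖c g‖ ≤ f g) ∧
      ¬ ∃ v : lp (fun _ : ℕ => H) 2, ∀ (g : G) (n : ℕ),
          (c g : ∀ _ : ℕ, H) n = π g ((v : ∀ _ : ℕ, H) n) - (v : ∀ _ : ℕ, H) n := by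
  let w : ℕ → ℝ := fun n => 1 / 2 / 2 ^ n
  have hw0 (n : ℕ) : 0 ≤ w n := by positivity
  have hw : Summable w := summable_geometric_two' 1
  choose ξ hξ1 hξ using fun n => exists_norm_eq_one_norm_map_sub_self_le π halmost hf1 hfproper
    (δ := √(w n) / 2) (by positivity)
  let F : ℕ → H := fun n => (√n)⁻¹ • ξ n
  have hF (g : G) (n : ℕ) : ‖π g (F n) - F n‖ ^ 2 ≤ f g ^ 2 * w n :=
    calc ‖π g (F n) - F n‖ ^ 2 ≤ (2 * (√(w n) / 2) * f g) ^ 2 := by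
          gcongr
          exact (norm_map_smul_sub_smul_le _ (abs_inv_sqrt_natCast_le_one n) _).trans (hξ n g)
      _ = f g ^ 2 * w n := by
          rw [mul_div_cancel₀ _ two_ne_zero, mul_pow, Real.sq_sqrt (hw0 n), mul_comm]
  let c (g : G) : lp (fun _ : ℕ => H) 2 :=
    ⟨fun n => π g (F n) - F n, memℓp_two_of_norm_sq_le (hw.mul_left _) (hF g)⟩
  refine ⟨ξ, c, hξ1, fun _ _ => rfl,
    continuous_lp_two_of_norm_sq_le (fun n => (hπcont (F n)).sub continuous_const)
      (hfcont.pow 2) hw0 hw hF,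
    fun g h n => map_mul_sub_self π g h (F n),
    fun g => lp.norm_le_of_norm_sq_le_mul (zero_le_one.trans (hf1 g)) hw
      (tsum_geometric_two' 1).le (hF g), ?_⟩
  rintro ⟨v, hv⟩
  have hvF : ⇑v = F := funext fun n => (eq_of_map_sub_self_eq π hnoinv fun g => hv g n).symm
  exact not_memℓp_two_inv_sqrt_smul hξ1 (hvF ▸ v.prop : Memℓp F 2)

/-- let `G` be a locally compact group, `π` an orthogonal
representation of `G` on a separable real Hilbert space `H` with almost invariant
vectors but no nonzero invariant vector, and `f : G → [1, ∞)` a proper continuous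
function.  Then there is a continuous 1-cocycle `c : G → ℓ²(ℕ, H)` for `π^{⊕ℕ}`
of the form `c(g) = (π(g)F(n) - F(n))_n` with `F(n) = ξ_n/√n` for unit vectors
`ξ_n`, satisfying `‖c(g)‖ ≤ f(g)` for all `g`, and which is not a coboundary. -/
theorem exists_cocycle_of_almost_invariant_vectors
    {G : Type*} [Group G] [TopologicalSpace G] [IsTopologicalGroup G]
    [LocallyCompactSpace G]
    {H : Type*} [NormedAddCommGroup H] [InnerProductSpace ℝ H] [CompleteSpace H]
    [TopologicalSpace.SeparableSpace H]
    (π : G →* (H ≃ₗᵢ[ℝ] H)) (hπcont : ∀ ξ : H, Continuous fun g : G => π g ξ)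
    (halmost : ∀ ε > (0 : ℝ), ∀ K : Set G, IsCompact K →
      ∃ ξ : H, ‖ξ‖ = 1 ∧ ∀ g ∈ K, ‖π g ξ - ξ‖ < ε)
    (hnoinv : ∀ ξ : H, (∀ g : G, π g ξ = ξ) → ξ = 0)
    (f : G → ℝ) (hfcont : Continuous f) (hf1 : ∀ g, 1 ≤ f g)
    (hfproper : ∀ R : ℝ, IsCompact {g : G | f g ≤ R}) :
    ∃ (ξ : ℕ → H) (c : G → lp (fun _ : ℕ => H) 2),
      (∀ n, ‖ξ n‖ = 1) ∧
      (∀ (g : G) (n : ℕ), (c g : ∀ _ : ℕ, H) n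
          = π g ((Real.sqrt n)⁻¹ • ξ n) - (Real.sqrt n)⁻¹ • ξ n) ∧
      Continuous c ∧
      (∀ g h : G, ∀ n : ℕ, (c (g * h) : ∀ _ : ℕ, H) n
          = (c g : ∀ _ : ℕ, H) n + π g ((c h : ∀ _ : ℕ, H) n)) ∧
      (∀ g : G, ‖c g‖ ≤ f g) ∧
      ¬ ∃ v : lp (fun _ : ℕ => H) 2, ∀ (g : G) (n : ℕ),
          (c g : ∀ _ : ℕ, H) n = π g ((v : ∀ _ : ℕ, H) n) - (v : ∀ _ : ℕ, H) n :=
  exists_cocycle_of_almost_invariant_vectors_general π hπcont halmost hnoinv f hfcont hf1 hfproper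
end
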